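/- (van der Corput with weights) Let (u_n) be a sequence in a Hilbert space H with ‖u_n‖ ≤ 1 for all n. Then limsup_{N→∞} ‖(1/N)∑_{n=0}^{N-1} u_n‖² ≤ 4 · liminf_{H→∞} (1/H)∑_{h=0}^{H-1} limsup_{N→∞} |(1/N)∑_{n=0}^{N-1} ⟨u_{n+h}, u_n⟩|. -/

import Mathlib

/-!
Averaging over a window of length `H` moves the Cesàro mean of `u` by at most `2H/N`. By
Cauchy–Schwarz, the square of the windowed mean is at most the average over pairs `h, h' < H` of
the correlation means of `u (· + h)` and `u (· + h')`, and by shift invariance their limsups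
depend only on `|h - h'|`. Each distance `k < H` is realised by at most `2H` of the `H²` pairs,
so `limsup ‖mean‖² ≤ 2 · (1/H) ∑_{k<H} γ k` for every `H ≥ 1`, where
`γ = upperCorrelation 𝕜 u`.
-/

open Filter Finset

open scoped InnerProductSpace

section Averages

variable {𝕜 E : Type*} [RCLike 𝕜] [SeminormedAddCommGroup E] [NormedSpace 𝕜 E]

theorem norm_sum_range_add_sub_sum_range_le {w : ℕ → E} {C : ℝ} (hw : ∀ n, ‖w n‖ ≤ C)
    (s N : ℕ) : ‖∑ n ∈ range N, w (n + s) - ∑ n ∈ range N, w n‖ ≤ 2 * s * C := by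
  have hshift : ∑ n ∈ range N, w (n + s) - ∑ n ∈ range N, w n =
      ∑ n ∈ range s, w (N + n) - ∑ n ∈ range s, w n := by
    have h₁ := sum_range_add w N s
    have h₂ := sum_range_add w s N
    rw [add_comm s N] at h₂
    simp only [add_comm _ s]
    rw [sub_eq_sub_iff_add_eq_add, add_comm, ← h₂, h₁, add_comm]
  have hbound (v : ℕ → E) (hv : ∀ n, ‖v n‖ ≤ C) : ‖∑ n ∈ range s, v n‖ ≤ s * C := by
    simpa using norm_sum_le_of_le (range s) fun n _ => hv n
  rw [hshift]
  linarith [norm_sub_le (∑ n ∈ range s, w (N + n)) (∑ n ∈ range s, w n),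
    hbound _ fun n => hw (N + n), hbound w hw]

theorem norm_inv_natCast_smul (N : ℕ) (x : E) : ‖(N : 𝕜)⁻¹ • x‖ = (N : ℝ)⁻¹ * ‖x‖ := by
  rw [norm_smul, norm_inv, RCLike.norm_natCast]

theorem norm_average_le {w : ℕ → E} {C : ℝ} {N : ℕ} (hC : 0 ≤ C) (hw : ∀ n < N, ‖w n‖ ≤ C) :
    ‖(N : 𝕜)⁻¹ • ∑ n ∈ range N, w n‖ ≤ C := by
  rcases N.eq_zero_or_pos with rfl | hN
  · simpa using hC
  rw [norm_inv_natCast_smul, inv_mul_le_iff₀ (by positivity)]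
  simpa using norm_sum_le_of_le (range N) fun n hn => hw n (mem_range.mp hn)

theorem norm_average_add_sub_average_le {w : ℕ → E} {C : ℝ} (hw : ∀ n, ‖w n‖ ≤ C) (s N : ℕ) :
    ‖(N : 𝕜)⁻¹ • ∑ n ∈ range N, w (n + s) - (N : 𝕜)⁻¹ • ∑ n ∈ range N, w n‖ ≤ 2 * s * C / N := by
  rw [← smul_sub, norm_inv_natCast_smul, inv_mul_eq_div]
  gcongr
  exact norm_sum_range_add_sub_sum_range_le hw s N

theorem limsup_norm_average_add_le {w : ℕ → E} {C : ℝ} (hw : ∀ n, ‖w n‖ ≤ C) (s : ℕ) :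
    limsup (fun N : ℕ => ‖(N : 𝕜)⁻¹ • ∑ n ∈ range N, w (n + s)‖) atTop ≤
      limsup (fun N : ℕ => ‖(N : 𝕜)⁻¹ • ∑ n ∈ range N, w n‖) atTop := by
  set L := limsup (fun N : ℕ => ‖(N : 𝕜)⁻¹ • ∑ n ∈ range N, w n‖) atTop
  have hC : 0 ≤ C := (norm_nonneg _).trans (hw 0)
  rw [limsup_le_iff' (isCoboundedUnder_le_of_le atTop fun _ => norm_nonneg _)
    (isBoundedUnder_of ⟨C, fun _ => norm_average_le hC fun n _ => hw (n + s)⟩)]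
  intro y hy
  have hL : ∀ᶠ N : ℕ in atTop, ‖(N : 𝕜)⁻¹ • ∑ n ∈ range N, w n‖ < L + (y - L) / 2 :=
    eventually_lt_of_limsup_lt (by linarith)
      (isBoundedUnder_of ⟨C, fun _ => norm_average_le hC fun n _ => hw n⟩)
  have herr : ∀ᶠ N : ℕ in atTop, 2 * s * C / N < (y - L) / 2 :=
    (tendsto_const_div_atTop_nhds_zero_nat _).eventually (gt_mem_nhds (by linarith))
  filter_upwards [hL, herr] with N hLN herrN
  calc _ ≤ _ := norm_le_norm_add_norm_sub' _ ((N : 𝕜)⁻¹ • ∑ n ∈ range N, w n)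
    _ ≤ L + (y - L) / 2 + (y - L) / 2 :=
      add_le_add hLN.le ((norm_average_add_sub_average_le hw s N).trans herrN.le)
    _ = y := by ring

theorem norm_sq_average_le_average_norm_sq (x : ℕ → E) (N : ℕ) :
    ‖(N : 𝕜)⁻¹ • ∑ n ∈ range N, x n‖ ^ 2 ≤ (N : ℝ)⁻¹ * ∑ n ∈ range N, ‖x n‖ ^ 2 := by
  have hCS : (∑ n ∈ range N, ‖x n‖) ^ 2 ≤ N * ∑ n ∈ range N, ‖x n‖ ^ 2 := by
    simpa using sq_sum_le_card_mul_sum_sq (s := range N) (f := fun n => ‖x n‖)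
  rcases N.eq_zero_or_pos with rfl | hN
  · simp
  calc ‖(N : 𝕜)⁻¹ • ∑ n ∈ range N, x n‖ ^ 2
      ≤ ((N : ℝ)⁻¹ * ∑ n ∈ range N, ‖x n‖) ^ 2 := by
        rw [norm_inv_natCast_smul]; gcongr; exact norm_sum_le _ _
    _ ≤ (N : ℝ)⁻¹ ^ 2 * (N * ∑ n ∈ range N, ‖x n‖ ^ 2) := by rw [mul_pow]; gcongr
    _ = (N : ℝ)⁻¹ * ∑ n ∈ range N, ‖x n‖ ^ 2 := by field_simp

theorem sq_norm_le_sq_norm_add_two_mul_norm_sub {x y : E} (hx : ‖x‖ ≤ 1) (hy : ‖y‖ ≤ 1) :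
    ‖x‖ ^ 2 ≤ ‖y‖ ^ 2 + 2 * ‖x - y‖ := by
  have hxy : ‖x‖ - ‖y‖ ≤ ‖x - y‖ := norm_sub_norm_le x y
  nlinarith [mul_le_mul_of_nonneg_right hxy (add_nonneg (norm_nonneg x) (norm_nonneg y)),
    mul_le_mul_of_nonneg_left (add_le_add hx hy) (norm_nonneg (x - y))]

end Averages

theorem sum_range_apply_dist_le {a : ℕ → ℝ} (ha : ∀ k, 0 ≤ a k) {H h : ℕ} (hh : h < H) :
    ∑ h' ∈ range H, a (Nat.dist h h') ≤ 2 * ∑ k ∈ range H, a k := by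
  have hfiber : ∀ k, #{h' ∈ range H | Nat.dist h h' = k} ≤ 2 := by
    intro k
    refine (card_le_card (t := {h + k, h - k}) fun h' hh' => ?_).trans card_le_two
    simp only [mem_filter] at hh'
    simp only [mem_insert, mem_singleton]
    unfold Nat.dist at hh'
    omega
  have himage : (range H).image (Nat.dist h) ⊆ range H := by
    intro k hk
    simp only [mem_image, mem_range] at hk ⊢
    obtain ⟨h', hh', rfl⟩ := hk
    unfold Nat.dist
    omega
  calc ∑ h' ∈ range H, a (Nat.dist h h')
      = ∑ k ∈ (range H).image (Nat.dist h), #{h' ∈ range H | Nat.dist h h' = k} • a k :=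
        sum_comp a (Nat.dist h)
    _ ≤ ∑ k ∈ (range H).image (Nat.dist h), 2 • a k := by
        gcongr with k; exacts [ha k, hfiber k]
    _ ≤ ∑ k ∈ range H, 2 • a k :=
        sum_le_sum_of_subset_of_nonneg himage fun k _ _ => nsmul_nonneg (ha k) 2
    _ = 2 * ∑ k ∈ range H, a k := by rw [← smul_sum, two_smul, two_mul]

theorem sum_range_sum_range_apply_dist_le {a : ℕ → ℝ} (ha : ∀ k, 0 ≤ a k) (H : ℕ) :
    ∑ h ∈ range H, ∑ h' ∈ range H, a (Nat.dist h h') ≤ 2 * H * ∑ k ∈ range H, a k := by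
  calc ∑ h ∈ range H, ∑ h' ∈ range H, a (Nat.dist h h')
      ≤ ∑ h ∈ range H, 2 * ∑ k ∈ range H, a k :=
        sum_le_sum fun h hh => sum_range_apply_dist_le ha (mem_range.mp hh)
    _ = 2 * H * ∑ k ∈ range H, a k := by rw [sum_const, card_range, nsmul_eq_mul]; ring

section InnerProduct

variable {𝕜 E : Type*} [RCLike 𝕜] [SeminormedAddCommGroup E] [InnerProductSpace 𝕜 E]

theorem norm_sum_sq_eq_sum_sum_re_inner {ι : Type*} (s : Finset ι) (x : ι → E) :
    ‖∑ i ∈ s, x i‖ ^ 2 = ∑ i ∈ s, ∑ j ∈ s, RCLike.re ⟪x i, x j⟫_𝕜 := by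
  rw [← inner_self_eq_norm_sq (𝕜 := 𝕜), sum_inner, map_sum]
  simp_rw [inner_sum, map_sum]

theorem norm_inner_le_one {x y : E} (hx : ‖x‖ ≤ 1) (hy : ‖y‖ ≤ 1) : ‖⟪x, y⟫_𝕜‖ ≤ 1 :=
  (norm_inner_le_norm x y).trans (mul_le_one₀ hx (norm_nonneg y) hy)

theorem norm_sq_average_window_le (u : ℕ → E) (H N : ℕ) :
    ‖(N : 𝕜)⁻¹ • ∑ n ∈ range N, (H : 𝕜)⁻¹ • ∑ h ∈ range H, u (n + h)‖ ^ 2 ≤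
      (H : ℝ)⁻¹ ^ 2 * ∑ h ∈ range H, ∑ h' ∈ range H,
        ‖(N : 𝕜)⁻¹ * ∑ n ∈ range N, ⟪u (n + h), u (n + h')⟫_𝕜‖ := by
  calc _ ≤ (N : ℝ)⁻¹ * ∑ n ∈ range N, ‖(H : 𝕜)⁻¹ • ∑ h ∈ range H, u (n + h)‖ ^ 2 :=
        norm_sq_average_le_average_norm_sq _ _
    _ = (H : ℝ)⁻¹ ^ 2 * ∑ h ∈ range H, ∑ h' ∈ range H,
          (N : ℝ)⁻¹ * RCLike.re (∑ n ∈ range N, ⟪u (n + h), u (n + h')⟫_𝕜) := by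
        simp_rw [norm_inv_natCast_smul, mul_pow, norm_sum_sq_eq_sum_sum_re_inner (𝕜 := 𝕜), map_sum,
          ← mul_sum]
        rw [sum_comm, mul_left_comm]
        congr 2
        exact sum_congr rfl fun _ _ => sum_comm
    _ ≤ (H : ℝ)⁻¹ ^ 2 * ∑ h ∈ range H, ∑ h' ∈ range H,
        ‖(N : 𝕜)⁻¹ * ∑ n ∈ range N, ⟪u (n + h), u (n + h')⟫_𝕜‖ := by
        gcongr with h _ h' _
        rw [norm_mul, norm_inv, RCLike.norm_natCast]
        gcongr
        exact RCLike.re_le_norm _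

theorem norm_sq_average_le_of_norm_le_one {u : ℕ → E} (hu : ∀ n, ‖u n‖ ≤ 1) {H : ℕ} (hH : 0 < H)
    (N : ℕ) :
    ‖(N : 𝕜)⁻¹ • ∑ n ∈ range N, u n‖ ^ 2 ≤
      (H : ℝ)⁻¹ ^ 2 * ∑ h ∈ range H, ∑ h' ∈ range H,
        ‖(N : 𝕜)⁻¹ * ∑ n ∈ range N, ⟪u (n + h), u (n + h')⟫_𝕜‖ + 4 * H / N := by
  set S := (N : 𝕜)⁻¹ • ∑ n ∈ range N, u n
  set T := (N : 𝕜)⁻¹ • ∑ n ∈ range N, (H : 𝕜)⁻¹ • ∑ h ∈ range H, u (n + h)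
  have hS : ‖S‖ ≤ 1 := norm_average_le zero_le_one fun n _ => hu n
  have hT : ‖T‖ ≤ 1 :=
    norm_average_le zero_le_one fun n _ => norm_average_le zero_le_one fun h _ => hu (n + h)
  have hST_eq :
      S - T = (H : 𝕜)⁻¹ • ∑ h ∈ range H, (S - (N : 𝕜)⁻¹ • ∑ n ∈ range N, u (n + h)) := by
    have hS_avg : (H : 𝕜)⁻¹ • ∑ h ∈ range H, S = S := by
      rw [sum_const, card_range, ← Nat.cast_smul_eq_nsmul 𝕜,
        inv_smul_smul₀ (Nat.cast_ne_zero.mpr hH.ne')]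
    rw [sum_sub_distrib, smul_sub, hS_avg]
    simp only [T, smul_sum, smul_comm (N : 𝕜)⁻¹ (H : 𝕜)⁻¹]
    rw [sum_comm]
  have hST : ‖S - T‖ ≤ 2 * H / N := by
    rw [hST_eq]
    refine norm_average_le (by positivity) fun h hh => ?_
    rw [norm_sub_rev]
    refine (norm_average_add_sub_average_le hu h N).trans ?_
    rw [mul_one]
    gcongr
  calc ‖S‖ ^ 2 ≤ ‖T‖ ^ 2 + 2 * ‖S - T‖ := sq_norm_le_sq_norm_add_two_mul_norm_sub hS hT
    _ ≤ _ := by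
      gcongr
      · exact norm_sq_average_window_le u H N
      · linarith [show 4 * (H : ℝ) / N = 2 * (2 * H / N) by ring]

variable (𝕜) in
noncomputable def upperCorrelation (u : ℕ → E) (k : ℕ) : ℝ :=
  limsup (fun N : ℕ => ‖(N : 𝕜)⁻¹ * ∑ n ∈ range N, ⟪u (n + k), u n⟫_𝕜‖) atTop

theorem norm_average_inner_le_one {u : ℕ → E} (hu : ∀ n, ‖u n‖ ≤ 1) (h h' N : ℕ) :
    ‖(N : 𝕜)⁻¹ * ∑ n ∈ range N, ⟪u (n + h), u (n + h')⟫_𝕜‖ ≤ 1 := by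
  simpa only [smul_eq_mul] using
    norm_average_le (𝕜 := 𝕜) (E := 𝕜) zero_le_one fun n _ =>
      norm_inner_le_one (𝕜 := 𝕜) (hu (n + h)) (hu (n + h'))

theorem norm_average_inner_comm (u : ℕ → E) (h h' N : ℕ) :
    ‖(N : 𝕜)⁻¹ * ∑ n ∈ range N, ⟪u (n + h), u (n + h')⟫_𝕜‖ =
      ‖(N : 𝕜)⁻¹ * ∑ n ∈ range N, ⟪u (n + h'), u (n + h)⟫_𝕜‖ := by
  simp_rw [norm_mul, ← inner_conj_symm (u (_ + h')), ← map_sum, RCLike.norm_conj]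

theorem upperCorrelation_nonneg {u : ℕ → E} (hu : ∀ n, ‖u n‖ ≤ 1) (k : ℕ) :
    0 ≤ upperCorrelation 𝕜 u k :=
  le_limsup_of_frequently_le (Frequently.of_forall fun _ => norm_nonneg _)
    (isBoundedUnder_of ⟨1, by simpa using norm_average_inner_le_one (𝕜 := 𝕜) hu k 0⟩)

theorem upperCorrelation_le_one {u : ℕ → E} (hu : ∀ n, ‖u n‖ ≤ 1) (k : ℕ) :
    upperCorrelation 𝕜 u k ≤ 1 :=
  limsup_le_of_le (isCoboundedUnder_le_of_le atTop fun _ => norm_nonneg _)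
    (Eventually.of_forall (by simpa using norm_average_inner_le_one (𝕜 := 𝕜) hu k 0))

theorem limsup_norm_average_inner_le_upperCorrelation {u : ℕ → E} (hu : ∀ n, ‖u n‖ ≤ 1)
    (h h' : ℕ) :
    limsup (fun N : ℕ => ‖(N : 𝕜)⁻¹ * ∑ n ∈ range N, ⟪u (n + h), u (n + h')⟫_𝕜‖) atTop ≤
      upperCorrelation 𝕜 u (Nat.dist h h') := by
  wlog hle : h' ≤ h generalizing h h'
  · simpa only [norm_average_inner_comm u h h', Nat.dist_comm h] using this h' h (by omega)
  obtain ⟨k, rfl⟩ := Nat.exists_eq_add_of_le hle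
  rw [Nat.dist_eq_sub_of_le_right hle, Nat.add_sub_cancel_left]
  unfold upperCorrelation
  simpa only [smul_eq_mul, add_right_comm _ h' k, ← add_assoc] using
    limsup_norm_average_add_le (𝕜 := 𝕜) (w := fun m => ⟪u (m + k), u m⟫_𝕜)
      (fun _ => norm_inner_le_one (hu _) (hu _)) h'

theorem limsup_norm_sq_average_le {u : ℕ → E} (hu : ∀ n, ‖u n‖ ≤ 1) {H : ℕ} (hH : 0 < H) :
    limsup (fun N : ℕ => ‖(N : 𝕜)⁻¹ • ∑ n ∈ range N, u n‖ ^ 2) atTop ≤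
      (H : ℝ)⁻¹ ^ 2 * ∑ h ∈ range H, ∑ h' ∈ range H, upperCorrelation 𝕜 u (Nat.dist h h') := by
  set K := (H : ℝ)⁻¹ ^ 2 * ∑ h ∈ range H, ∑ h' ∈ range H, upperCorrelation 𝕜 u (Nat.dist h h')
  rw [limsup_le_iff' (isCoboundedUnder_le_of_le atTop fun _ => sq_nonneg _)
    (isBoundedUnder_of ⟨1, fun _ => pow_le_one₀ (norm_nonneg _)
      (norm_average_le zero_le_one fun n _ => hu n)⟩)]
  intro y hy
  set ε := (y - K) / 2
  have hε : 0 < ε := half_pos (sub_pos.mpr hy)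
  have hcorr : ∀ᶠ N : ℕ in atTop, ∀ h ∈ range H, ∀ h' ∈ range H,
      ‖(N : 𝕜)⁻¹ * ∑ n ∈ range N, ⟪u (n + h), u (n + h')⟫_𝕜‖ <
        upperCorrelation 𝕜 u (Nat.dist h h') + ε := by
    simp only [eventually_all_finset]
    intro h _ h' _
    exact eventually_lt_of_limsup_lt
      ((limsup_norm_average_inner_le_upperCorrelation hu h h').trans_lt
        (lt_add_of_pos_right _ hε))
      (isBoundedUnder_of ⟨1, norm_average_inner_le_one hu h h'⟩)
  have herr : ∀ᶠ N : ℕ in atTop, 4 * H / N < ε :=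
    (tendsto_const_div_atTop_nhds_zero_nat _).eventually (gt_mem_nhds hε)
  filter_upwards [hcorr, herr] with N hcorrN herrN
  have hsum_eps : (H : ℝ)⁻¹ ^ 2 * ∑ h ∈ range H, ∑ h' ∈ range H, ε = ε := by
    simp only [sum_const, card_range, nsmul_eq_mul]
    field_simp
  calc _ ≤ (H : ℝ)⁻¹ ^ 2 * ∑ h ∈ range H, ∑ h' ∈ range H,
          ‖(N : 𝕜)⁻¹ * ∑ n ∈ range N, ⟪u (n + h), u (n + h')⟫_𝕜‖ + 4 * H / N :=
        norm_sq_average_le_of_norm_le_one hu hH N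
    _ ≤ (H : ℝ)⁻¹ ^ 2 * ∑ h ∈ range H, ∑ h' ∈ range H,
          (upperCorrelation 𝕜 u (Nat.dist h h') + ε) + ε := by
        gcongr with h hh h' hh'
        exact (hcorrN h hh h' hh').le
    _ = K + ε + ε := by simp only [sum_add_distrib, mul_add, hsum_eps, K]
    _ = y := by simp only [ε]; ring

theorem limsup_norm_sq_average_le_two_mul_average_upperCorrelation {u : ℕ → E}
    (hu : ∀ n, ‖u n‖ ≤ 1) {H : ℕ} (hH : 0 < H) :
    limsup (fun N : ℕ => ‖(N : 𝕜)⁻¹ • ∑ n ∈ range N, u n‖ ^ 2) atTop ≤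
      2 * ((H : ℝ)⁻¹ * ∑ h ∈ range H, upperCorrelation 𝕜 u h) :=
  calc _ ≤ (H : ℝ)⁻¹ ^ 2 * ∑ h ∈ range H, ∑ h' ∈ range H, upperCorrelation 𝕜 u (Nat.dist h h') :=
        limsup_norm_sq_average_le hu hH
    _ ≤ (H : ℝ)⁻¹ ^ 2 * (2 * H * ∑ k ∈ range H, upperCorrelation 𝕜 u k) := by
        gcongr
        exact sum_range_sum_range_apply_dist_le (upperCorrelation_nonneg hu) H
    _ = 2 * ((H : ℝ)⁻¹ * ∑ h ∈ range H, upperCorrelation 𝕜 u h) := by field_simp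

end InnerProduct

/-- The van der Corput inequality in a Hilbert space: if `‖u_n‖ ≤ 1` for all `n`, then
`limsup_N ‖(1/N) ∑_{n<N} u_n‖² ≤ 4 · liminf_H (1/H) ∑_{h<H} limsup_N |(1/N) ∑_{n<N} ⟨u_{n+h}, u_n⟩|`. -/
theorem van_der_corput_hilbert {𝕜 E : Type*} [RCLike 𝕜]
    [NormedAddCommGroup E] [InnerProductSpace 𝕜 E]
    (u : ℕ → E) (hu : ∀ n, ‖u n‖ ≤ 1) :
    limsup (fun N : ℕ => ‖(N : 𝕜)⁻¹ • ∑ n ∈ Finset.range N, u n‖ ^ 2) atTop ≤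
      4 * liminf (fun H : ℕ => (H : ℝ)⁻¹ * ∑ h ∈ Finset.range H,
          limsup (fun N : ℕ =>
            ‖(N : 𝕜)⁻¹ * ∑ n ∈ Finset.range N, (inner 𝕜 (u (n + h)) (u n) : 𝕜)‖) atTop) atTop := by
  change _ ≤ 4 * liminf (fun H : ℕ => (H : ℝ)⁻¹ * ∑ h ∈ range H, upperCorrelation 𝕜 u h) atTop
  set L := limsup (fun N : ℕ => ‖(N : 𝕜)⁻¹ • ∑ n ∈ range N, u n‖ ^ 2) atTop
  set g : ℕ → ℝ := fun H => (H : ℝ)⁻¹ * ∑ h ∈ range H, upperCorrelation 𝕜 u h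
  have hg_nonneg : ∀ H, 0 ≤ g H := fun H =>
    mul_nonneg (by positivity) (sum_nonneg fun h _ => upperCorrelation_nonneg hu h)
  have hg_le_one : ∀ H, g H ≤ 1 := fun H =>
    calc g H ≤ (H : ℝ)⁻¹ * ∑ h ∈ range H, 1 :=
          mul_le_mul_of_nonneg_left (sum_le_sum fun h _ => upperCorrelation_le_one hu h)
            (by positivity)
      _ ≤ 1 := by simpa using inv_mul_le_one_of_le₀ le_rfl (Nat.cast_nonneg H)
  have hg_cobdd : IsCoboundedUnder (· ≥ ·) atTop g := isCoboundedUnder_ge_of_le atTop hg_le_one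
  have hL : ∀ᶠ H in atTop, L / 2 ≤ g H := (eventually_gt_atTop 0).mono fun H hH => by
    linarith [limsup_norm_sq_average_le_two_mul_average_upperCorrelation (𝕜 := 𝕜) hu hH]
  linarith [le_liminf_of_le hg_cobdd hL, le_liminf_of_le hg_cobdd (Eventually.of_forall hg_nonneg)]
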